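/- There is no graph G with α(G) > |V(G)|/2 and core(G) = ∅. -/

import Mathlib

open Finset

variable {V : Type*} [Fintype V] [DecidableEq V]

/-  A set of vertices is stable (independent) if no two of its vertices are adjacent. -/
def stable (G : SimpleGraph V) (S : Finset V) : Prop :=
  ∀ a ∈ S, ∀ b ∈ S, ¬ G.Adj a b

/-  The (open) neighborhood of a set of vertices. -/
open Classical in
noncomputable def nbhd (G : SimpleGraph V) (A : Finset V) : Finset V :=
  Finset.univ.filter fun v => ∃ a ∈ A, G.Adj a v

/-  The stability number: maximum size of a stable set. -/
open Classical in
noncomputable def alpha (G : SimpleGraph V) : ℕ :=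
  Finset.univ.sup fun S : Finset V => if stable G S then S.card else 0

/-  A maximum stable set. -/
def maxStable (G : SimpleGraph V) (S : Finset V) : Prop :=
  stable G S ∧ S.card = alpha G

/-  core(G): the intersection of all maximum stable sets. -/
open Classical in
noncomputable def core (G : SimpleGraph V) : Finset V :=
  Finset.univ.filter fun v => ∀ S : Finset V, maxStable G S → v ∈ S

/-  A vertex is isolated if it has no neighbors. -/
def isolated (G : SimpleGraph V) (v : V) : Prop := ∀ w, ¬ G.Adj v w

/-  The set of isolated vertices. -/
open Classical in
noncomputable def isol (G : SimpleGraph V) : Finset V :=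
  Finset.univ.filter fun v => isolated G v

/- For a stable set `I` and a maximum stable set `S`, the set `I ∪ (S \ (N(I) ∪ I))` is stable, so
`|I| ≤ |S ∩ N(I)| + |S ∩ I|`; and `N(I ∩ S) ⊆ N(I) \ S`. Together, `|I| - |N(I)|` does not decrease
when `I` is replaced by `I ∩ S`. A maximum stable set has `|S| - |N(S)| ≥ 2α - n`, so a smallest
stable set `I` with `|I| - |N(I)| ≥ 2α - n` lies in every maximum stable set, hence in `core G`,
which therefore has at least `2α - n` vertices. -/

omit [Fintype V] [DecidableEq V] in
theorem stable.mono {G : SimpleGraph V} {S T : Finset V} (hS : stable G S) (hT : T ⊆ S) :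
    stable G T := fun a ha b hb => hS a (hT ha) b (hT hb)

omit [DecidableEq V] in
@[simp]
theorem mem_nbhd {G : SimpleGraph V} {A : Finset V} {v : V} :
    v ∈ nbhd G A ↔ ∃ a ∈ A, G.Adj a v := by
  simp [nbhd]

omit [DecidableEq V] in
theorem disjoint_nbhd {G : SimpleGraph V} {S : Finset V} (hS : stable G S) :
    Disjoint S (nbhd G S) :=
  Finset.disjoint_left.mpr fun v hv hvN => by
    obtain ⟨a, ha, hav⟩ := mem_nbhd.mp hvN
    exact hS a ha v hv hav

theorem stable_union {G : SimpleGraph V} {I C : Finset V} (hI : stable G I) (hC : stable G C)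
    (hCI : Disjoint C (nbhd G I)) : stable G (I ∪ C) := by
  have hCI' : ∀ a ∈ I, ∀ c ∈ C, ¬ G.Adj a c := fun a ha c hc hac =>
    Finset.disjoint_left.mp hCI hc (mem_nbhd.mpr ⟨a, ha, hac⟩)
  intro a ha b hb
  rcases Finset.mem_union.mp ha with ha | ha <;> rcases Finset.mem_union.mp hb with hb | hb
  · exact hI a ha b hb
  · exact hCI' a ha b hb
  · exact fun hab => hCI' b hb a ha hab.symm
  · exact hC a ha b hb

omit [DecidableEq V] in
theorem card_le_alpha {G : SimpleGraph V} {S : Finset V} (hS : stable G S) :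
    S.card ≤ alpha G := by
  classical
  have := Finset.le_sup (f := fun S : Finset V => if stable G S then S.card else 0)
    (Finset.mem_univ S)
  rw [alpha]
  simpa [hS] using this

omit [DecidableEq V] in
theorem exists_maxStable (G : SimpleGraph V) : ∃ S, maxStable G S := by
  classical
  obtain ⟨S, -, hS⟩ := Finset.exists_mem_eq_sup (Finset.univ : Finset (Finset V))
    Finset.univ_nonempty (fun S : Finset V => if stable G S then S.card else 0)
  by_cases h : stable G S
  · exact ⟨S, h, by rw [alpha, hS, if_pos h]⟩
  · exact ⟨∅, by simp [stable], by rw [alpha, hS, if_neg h, Finset.card_empty]⟩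

theorem card_add_card_nbhd_le {G : SimpleGraph V} {S : Finset V} (hS : stable G S) :
    S.card + (nbhd G S).card ≤ Fintype.card V := by
  rw [← Finset.card_union_of_disjoint (disjoint_nbhd hS)]
  exact Finset.card_le_univ _

theorem nbhd_inter_subset_sdiff {G : SimpleGraph V} {I S : Finset V} (hS : stable G S) :
    nbhd G (I ∩ S) ⊆ nbhd G I \ S := by
  intro v hv
  obtain ⟨a, ha, hav⟩ := mem_nbhd.mp hv
  rw [Finset.mem_inter] at ha
  exact Finset.mem_sdiff.mpr ⟨mem_nbhd.mpr ⟨a, ha.1, hav⟩, fun hvS => hS a ha.2 v hvS hav⟩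

theorem card_le_card_inter_nbhd_union {G : SimpleGraph V} {I S : Finset V} (hI : stable G I)
    (hS : maxStable G S) : I.card ≤ (S ∩ (nbhd G I ∪ I)).card := by
  set C := S \ (nbhd G I ∪ I)
  have hCS : C ⊆ S := Finset.sdiff_subset
  have hCN : Disjoint C (nbhd G I) :=
    Finset.disjoint_of_subset_right Finset.subset_union_left Finset.sdiff_disjoint
  have hCI : Disjoint I C :=
    Finset.disjoint_of_subset_left Finset.subset_union_right Finset.sdiff_disjoint.symm
  have hIC : I.card + C.card ≤ S.card := by
    rw [← Finset.card_union_of_disjoint hCI, hS.2]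
    exact card_le_alpha (stable_union hI (hS.1.mono hCS) hCN)
  have hsplit : (S ∩ (nbhd G I ∪ I)).card + C.card = S.card :=
    Finset.card_inter_add_card_sdiff S (nbhd G I ∪ I)
  omega

theorem card_add_card_nbhd_inter_le {G : SimpleGraph V} {I S : Finset V} (hI : stable G I)
    (hS : maxStable G S) :
    I.card + (nbhd G (I ∩ S)).card ≤ (nbhd G I).card + (I ∩ S).card := by
  have hI_le := card_le_card_inter_nbhd_union hI hS
  have hunion : (S ∩ (nbhd G I ∪ I)).card ≤ (S ∩ nbhd G I).card + (I ∩ S).card := by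
    rw [Finset.inter_union_distrib_left, Finset.inter_comm S I]
    exact Finset.card_union_le _ _
  have hN : (nbhd G (I ∩ S)).card + (S ∩ nbhd G I).card ≤ (nbhd G I).card := by
    have hsub := Finset.card_le_card (nbhd_inter_subset_sdiff (I := I) hS.1)
    have hsplit := Finset.card_sdiff_add_card_inter (nbhd G I) S
    rw [Finset.inter_comm S]
    omega
  omega

theorem exists_stable_forall_maxStable_subset (G : SimpleGraph V) :
    ∃ I, stable G I ∧ (∀ S, maxStable G S → I ⊆ S) ∧
      2 * alpha G + (nbhd G I).card ≤ Fintype.card V + I.card := by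
  classical
  let P : Finset V → Prop := fun I =>
    stable G I ∧ 2 * alpha G + (nbhd G I).card ≤ Fintype.card V + I.card
  have hP_inter : ∀ I S, P I → maxStable G S → P (I ∩ S) := fun I S hI hS =>
    ⟨hI.1.mono Finset.inter_subset_left, by
      have := card_add_card_nbhd_inter_le hI.1 hS
      omega⟩
  obtain ⟨S₀, hS₀⟩ := exists_maxStable G
  have hPS₀ : P S₀ := ⟨hS₀.1, by
    have := card_add_card_nbhd_le hS₀.1
    have := hS₀.2
    omega⟩
  obtain ⟨I, hI, hImin⟩ := Finset.exists_min_image (Finset.univ.filter P) Finset.card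
    ⟨S₀, Finset.mem_filter.mpr ⟨Finset.mem_univ _, hPS₀⟩⟩
  have hPI := (Finset.mem_filter.mp hI).2
  refine ⟨I, hPI.1, fun S hS => ?_, hPI.2⟩
  have hle := hImin (I ∩ S) (Finset.mem_filter.mpr ⟨Finset.mem_univ _, hP_inter I S hPI hS⟩)
  rw [← Finset.eq_of_subset_of_card_le Finset.inter_subset_left hle]
  exact Finset.inter_subset_right

theorem two_mul_alpha_le_card_add_card_core (G : SimpleGraph V) :
    2 * alpha G ≤ Fintype.card V + (core G).card := by
  obtain ⟨I, -, hIS, hI⟩ := exists_stable_forall_maxStable_subset G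
  have hIcore : I ⊆ core G := fun v hv => by
    classical
    simpa [core] using fun S hS => hIS S hS hv
  have := Finset.card_le_card hIcore
  omega

theorem stmt8 (G : SimpleGraph V) (h1 : Fintype.card V < 2 * alpha G) :
    core G ≠ ∅ := by
  have := two_mul_alpha_le_card_add_card_core G
  rw [← Finset.nonempty_iff_ne_empty, ← Finset.card_pos]
  omega
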